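/- arXiv:2007.07953 — 8 statements merged into one kernel-verified Lean document; each statement's English description precedes it below -/
import Mathlib

section
/- Let d, q be positive integers, let D be a real d × q matrix, ν ∈ ℝ^d, λ̄ ≥ 0, γ̄ ≥ 0, and define f(η) = (1/2)‖η − ν‖₂² + λ̄‖Dᵀη‖₂ + γ̄‖η‖₂. Let P : ℝ^d → ℝ^d be the orthogonal projection onto the orthogonal complement of the column space of D. Suppose there exists w ∈ ℝ^q with ‖w‖₂ ≤ λ̄ and Dw = ν − Pν. Then the vector η̂ = max(1 − γ̄/‖Pν‖₂, 0) · Pν (interpreted as η̂ = 0 when Pν = 0) is a global minimizer of f over ℝ^d. -/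
/-! The minimand is `(1/2)‖η − ν‖² + h η` with `h` convex, so a point `η̂` minimizes it as soon as
`ν − η̂` is a subgradient of `h` at `η̂`. Since `Dᵀη̂ = 0`, the vector `Dw` is a subgradient of
`λ̄‖Dᵀ·‖` at `η̂` (Cauchy–Schwarz and `‖w‖ ≤ λ̄`), and `(1 − c)Pν` with `c = max(1 − γ̄/‖Pν‖, 0)` is a
subgradient of `γ̄‖·‖` at `η̂ = c Pν`; their sum is `ν − Pν + (1 − c)Pν = ν − η̂`. -/

open Matrix

noncomputable def l2norm {ι : Type*} [Fintype ι] (v : ι → ℝ) : ℝ :=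
  Real.sqrt (∑ i, (v i) ^ 2)

section L2norm

variable {ι : Type*} [Fintype ι]

lemma l2norm_eq_norm (v : ι → ℝ) : l2norm v = ‖WithLp.toLp 2 v‖ := by
  simp [l2norm, EuclideanSpace.norm_eq]

lemma dotProduct_eq_inner (u v : ι → ℝ) :
    u ⬝ᵥ v = inner ℝ (WithLp.toLp 2 u) (WithLp.toLp 2 v) := by
  rw [EuclideanSpace.inner_toLp_toLp, star_trivial, dotProduct_comm]

lemma l2norm_nonneg (v : ι → ℝ) : 0 ≤ l2norm v := by
  rw [l2norm_eq_norm]; exact norm_nonneg _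

lemma l2norm_smul_of_nonneg {c : ℝ} (hc : 0 ≤ c) (v : ι → ℝ) :
    l2norm (c • v) = c * l2norm v := by
  rw [l2norm_eq_norm, l2norm_eq_norm, WithLp.toLp_smul, norm_smul, Real.norm_of_nonneg hc]

lemma l2norm_sq (v : ι → ℝ) : l2norm v ^ 2 = v ⬝ᵥ v := by
  rw [l2norm_eq_norm, dotProduct_eq_inner, real_inner_self_eq_norm_sq]

lemma dotProduct_le_l2norm_mul_l2norm (u v : ι → ℝ) : u ⬝ᵥ v ≤ l2norm u * l2norm v := by
  rw [dotProduct_eq_inner, l2norm_eq_norm, l2norm_eq_norm]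
  exact real_inner_le_norm _ _

end L2norm

section Subgradient

variable {ι κ : Type*} [Fintype ι] [Fintype κ]

def IsSubgradientAt (h : (ι → ℝ) → ℝ) (x g : ι → ℝ) : Prop :=
  ∀ y, h x + g ⬝ᵥ (y - x) ≤ h y

lemma IsSubgradientAt.add {h₁ h₂ : (ι → ℝ) → ℝ} {x g₁ g₂ : ι → ℝ}
    (h₁x : IsSubgradientAt h₁ x g₁) (h₂x : IsSubgradientAt h₂ x g₂) :
    IsSubgradientAt (fun y => h₁ y + h₂ y) x (g₁ + g₂) := fun y => by
  have := add_le_add (h₁x y) (h₂x y)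
  rw [add_dotProduct]
  linarith

lemma IsSubgradientAt.comp_mulVec {h : (κ → ℝ) → ℝ} (A : Matrix κ ι ℝ) {x : ι → ℝ} {g : κ → ℝ}
    (hx : IsSubgradientAt h (A *ᵥ x) g) :
    IsSubgradientAt (fun y => h (A *ᵥ y)) x (Aᵀ *ᵥ g) := fun y => by
  simpa only [mulVec_transpose, ← dotProduct_mulVec, mulVec_sub] using hx (A *ᵥ y)

lemma isSubgradientAt_mul_l2norm {γ : ℝ} {x g : ι → ℝ} (hg : l2norm g ≤ γ)
    (hgx : g ⬝ᵥ x = γ * l2norm x) :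
    IsSubgradientAt (fun y => γ * l2norm y) x g := fun y => by
  have := dotProduct_le_l2norm_mul_l2norm g y
  have := mul_le_mul_of_nonneg_right hg (l2norm_nonneg y)
  rw [dotProduct_sub, hgx]
  linarith

lemma isSubgradientAt_mul_l2norm_zero {γ : ℝ} {g : ι → ℝ} (hg : l2norm g ≤ γ) :
    IsSubgradientAt (fun y => γ * l2norm y) 0 g :=
  isSubgradientAt_mul_l2norm hg (by simp [l2norm])

lemma IsSubgradientAt.prox_le {h : (ι → ℝ) → ℝ} {x ν : ι → ℝ}
    (hx : IsSubgradientAt h x (ν - x)) (y : ι → ℝ) :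
    (1 / 2) * l2norm (x - ν) ^ 2 + h x ≤ (1 / 2) * l2norm (y - ν) ^ 2 + h y := by
  have hsub := hx y
  have hsq := dotProduct_self_star_nonneg (y - x)
  rw [← neg_sub x ν, neg_dotProduct] at hsub
  rw [show y - ν = (x - ν) + (y - x) by abel, l2norm_sq, l2norm_sq]
  simp only [add_dotProduct, dotProduct_add, dotProduct_comm (y - x) (x - ν)] at hsq ⊢
  simp only [star_trivial] at hsq
  linarith

end Subgradient

lemma shrink_factor_mem_Icc {γ s : ℝ} (hγ : 0 ≤ γ) (hs : 0 ≤ s) :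
    max (1 - γ / s) 0 ∈ Set.Icc 0 1 :=
  ⟨le_max_right _ _, max_le (by linarith [div_nonneg hγ hs]) zero_le_one⟩

lemma shrink_factor_residual_le {γ s : ℝ} (hγ : 0 ≤ γ) (hs : 0 ≤ s) :
    (1 - max (1 - γ / s) 0) * s ≤ γ := by
  rcases hs.eq_or_lt with rfl | hs
  · simpa using hγ
  rcases le_total (1 - γ / s) 0 with h | h
  · rw [max_eq_right h]
    linarith [(one_le_div hs).mp (by linarith : 1 ≤ γ / s)]
  · rw [max_eq_left h]
    field_simp
    linarith

/-- Complementary slackness for the shrinkage: either `c = 0` or the residual `(1 - c) s` equals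
`γ` exactly. -/
lemma shrink_factor_complementary {γ s : ℝ} (hs : 0 ≤ s) :
    max (1 - γ / s) 0 * (1 - max (1 - γ / s) 0) * s ^ 2 = γ * (max (1 - γ / s) 0 * s) := by
  rcases hs.eq_or_lt with rfl | hs
  · ring
  rcases le_total (1 - γ / s) 0 with h | h
  · rw [max_eq_right h]; ring
  · rw [max_eq_left h]; field_simp; ring

lemma isSubgradientAt_mul_l2norm_shrink {ι : Type*} [Fintype ι] {γ : ℝ} (hγ : 0 ≤ γ)
    (p : ι → ℝ) :
    IsSubgradientAt (fun y => γ * l2norm y) (max (1 - γ / l2norm p) 0 • p)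
      ((1 - max (1 - γ / l2norm p) 0) • p) := by
  set c := max (1 - γ / l2norm p) 0
  have hs := l2norm_nonneg p
  obtain ⟨hc₀, hc₁⟩ := shrink_factor_mem_Icc hγ hs
  apply isSubgradientAt_mul_l2norm
  · rw [l2norm_smul_of_nonneg (by linarith)]
    exact shrink_factor_residual_le hγ hs
  · rw [l2norm_smul_of_nonneg hc₀, smul_dotProduct, dotProduct_smul, ← l2norm_sq,
      ← shrink_factor_complementary hs]
    simp only [smul_eq_mul]
    ring

theorem prox_projection_solution_general
    (d q : ℕ)
    (D : Matrix (Fin d) (Fin q) ℝ) (ν : Fin d → ℝ)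
    (lamBar gamBar : ℝ) (hgam : 0 ≤ gamBar)
    (f : (Fin d → ℝ) → ℝ)
    (hf : ∀ η, f η = (1 / 2) * (l2norm (fun i => η i - ν i)) ^ 2
        + lamBar * l2norm (D.transpose.mulVec η) + gamBar * l2norm η)
    (P : (Fin d → ℝ) → (Fin d → ℝ))
    (hPperp : ∀ v, D.transpose.mulVec (P v) = 0)
    (w : Fin q → ℝ) (hw : l2norm w ≤ lamBar) (hDw : D.mulVec w = ν - P ν) :
    ∀ η, f (max (1 - gamBar / l2norm (P ν)) 0 • P ν) ≤ f η := by
  set c := max (1 - gamBar / l2norm (P ν)) 0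
  have hDη : Dᵀ *ᵥ (c • P ν) = 0 := by rw [mulVec_smul, hPperp, smul_zero]
  have hDw_subgrad : IsSubgradientAt (fun η => lamBar * l2norm (Dᵀ *ᵥ η)) (c • P ν) (D *ᵥ w) := by
    have h0 := isSubgradientAt_mul_l2norm_zero hw
    rw [← hDη] at h0
    simpa only [transpose_transpose] using h0.comp_mulVec Dᵀ
  have hsum := hDw_subgrad.add (isSubgradientAt_mul_l2norm_shrink hgam (P ν))
  have hres : D *ᵥ w + (1 - c) • P ν = ν - c • P ν := by rw [hDw, sub_smul, one_smul]; abel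
  rw [hres] at hsum
  intro η
  rw [hf, hf, add_assoc, add_assoc]
  exact hsum.prox_le η

/-- Part (ii) of the closed-form proximal solution.  `P` is the orthogonal
projection onto the orthogonal complement of the column space of `D`
(characterized by: `Dᵀ(P v) = 0`, i.e. `P v ⟂ col(D)`, and `v − P v ∈ col(D)`).
If some `w` with `‖w‖₂ ≤ λ̄` satisfies `D w = ν − P ν`, then
`η̂ = max(1 − γ̄/‖Pν‖₂, 0) · Pν` globally minimizes
`f(η) = (1/2)‖η − ν‖₂² + λ̄‖Dᵀη‖₂ + γ̄‖η‖₂`. -/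
theorem prox_projection_solution
    (d q : ℕ) (hd : 0 < d) (hq : 0 < q)
    (D : Matrix (Fin d) (Fin q) ℝ) (ν : Fin d → ℝ)
    (lamBar gamBar : ℝ) (hlam : 0 ≤ lamBar) (hgam : 0 ≤ gamBar)
    (f : (Fin d → ℝ) → ℝ)
    (hf : ∀ η, f η = (1 / 2) * (l2norm (fun i => η i - ν i)) ^ 2
        + lamBar * l2norm (D.transpose.mulVec η) + gamBar * l2norm η)
    (P : (Fin d → ℝ) → (Fin d → ℝ))
    (hPperp : ∀ v, D.transpose.mulVec (P v) = 0)
    (hPcol : ∀ v, ∃ u : Fin q → ℝ, D.mulVec u = v - P v)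
    (w : Fin q → ℝ) (hw : l2norm w ≤ lamBar) (hDw : D.mulVec w = ν - P ν) :
    ∀ η, f (max (1 - gamBar / l2norm (P ν)) 0 • P ν) ≤ f η :=
  prox_projection_solution_general d q D ν lamBar gamBar hgam f hf P hPperp w hw hDw
end

section
/- Let d, q be positive integers, let D be a real d × q matrix, ν ∈ ℝ^d, λ̄ > 0, γ̄ ≥ 0, and define f(η) = (1/2)‖η − ν‖₂² + λ̄‖Dᵀη‖₂ + γ̄‖η‖₂. Suppose τ > 0 satisfies ‖(DᵀD + τI)⁻¹Dᵀν‖₂ = λ̄, and set P_τ = I − D(DᵀD + τI)⁻¹Dᵀ (the matrix DᵀD + τI is invertible since it is positive definite). Then the vector η̂ = max(1 − γ̄/‖P_τ ν‖₂, 0) · P_τ ν (interpreted as η̂ = 0 when P_τ ν = 0) is a global minimizer of f over ℝ^d. -/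
open Matrix WithLp
open scoped RealInnerProductSpace

section Prox

variable {E F : Type*} [NormedAddCommGroup E] [InnerProductSpace ℝ E]
  [NormedAddCommGroup F] [InnerProductSpace ℝ F]

theorem inner_sub_le_of_norm_le_of_inner_eq {c : ℝ} {w y₀ : F} (hw : ‖w‖ ≤ c)
    (hwy₀ : ⟪w, y₀⟫ = c * ‖y₀‖) (y : F) : ⟪w, y - y₀⟫ ≤ c * ‖y‖ - c * ‖y₀‖ := by
  have hCS : ⟪w, y⟫ ≤ c * ‖y‖ :=
    (real_inner_le_norm w y).trans (mul_le_mul_of_nonneg_right hw (norm_nonneg y))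
  rw [inner_sub_right, hwy₀]
  linarith

theorem half_sq_norm_sub_add_le_of_subgradient {h : E → ℝ} {ν x₀ : E}
    (hsub : ∀ x, ⟪ν - x₀, x - x₀⟫ ≤ h x - h x₀) (x : E) :
    1 / 2 * ‖x₀ - ν‖ ^ 2 + h x₀ ≤ 1 / 2 * ‖x - ν‖ ^ 2 + h x := by
  have hexp : ‖x - ν‖ ^ 2 = ‖x₀ - ν‖ ^ 2 + 2 * ⟪x₀ - ν, x - x₀⟫ + ‖x - x₀‖ ^ 2 := by
    rw [← norm_add_sq_real, sub_add_sub_cancel']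
  have hx := hsub x
  rw [← neg_sub, inner_neg_left] at hx
  nlinarith [sq_nonneg ‖x - x₀‖]

theorem half_sq_norm_sub_add_norm_add_norm_le_of_certificate (A : E → F) {lam gam : ℝ}
    {ν x₀ u s : E} {w : F} (hu : ∀ x, ⟪u, x⟫ = ⟪w, A x⟫) (hν : ν - x₀ = u + s)
    (hw : ‖w‖ ≤ lam) (hwx₀ : ⟪w, A x₀⟫ = lam * ‖A x₀‖)
    (hs : ‖s‖ ≤ gam) (hsx₀ : ⟪s, x₀⟫ = gam * ‖x₀‖) (x : E) :
    1 / 2 * ‖x₀ - ν‖ ^ 2 + lam * ‖A x₀‖ + gam * ‖x₀‖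
      ≤ 1 / 2 * ‖x - ν‖ ^ 2 + lam * ‖A x‖ + gam * ‖x‖ := by
  simp only [add_assoc]
  refine half_sq_norm_sub_add_le_of_subgradient
    (h := fun x => lam * ‖A x‖ + gam * ‖x‖) (fun x => ?_) x
  have hA := inner_sub_le_of_norm_le_of_inner_eq hw hwx₀ (A x)
  have hx := inner_sub_le_of_norm_le_of_inner_eq hs hsx₀ x
  rw [inner_sub_right, ← hu, ← hu, ← inner_sub_right] at hA
  rw [hν, inner_add_left]
  linarith

theorem norm_sub_max_one_sub_div_norm_smul_le {γ : ℝ} (hγ : 0 ≤ γ) (p : E) :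
    ‖p - max (1 - γ / ‖p‖) 0 • p‖ ≤ γ := by
  set c := max (1 - γ / ‖p‖) 0
  have hc : 1 - c ≤ γ / ‖p‖ := by linarith [le_max_left (1 - γ / ‖p‖) 0]
  have hc1 : c ≤ 1 := max_le (by linarith [div_nonneg hγ (norm_nonneg p)]) zero_le_one
  have hres : p - c • p = (1 - c) • p := by rw [sub_smul, one_smul]
  rw [hres, norm_smul, Real.norm_of_nonneg (by linarith)]
  rcases (norm_nonneg p).eq_or_lt with hp | hp
  · rw [← hp, mul_zero]; exact hγ
  · exact (le_div_iff₀ hp).mp hc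

theorem inner_sub_max_one_sub_div_norm_smul {γ : ℝ} (p : E) :
    ⟪p - max (1 - γ / ‖p‖) 0 • p, max (1 - γ / ‖p‖) 0 • p⟫
      = γ * ‖max (1 - γ / ‖p‖) 0 • p‖ := by
  rcases max_cases (1 - γ / ‖p‖) 0 with ⟨hc, hc0⟩ | ⟨hc, -⟩ <;> rw [hc]
  · have hres : p - (1 - γ / ‖p‖) • p = (γ / ‖p‖) • p := by
      rw [sub_smul, one_smul, sub_sub_cancel]
    rw [hres, real_inner_smul_left, real_inner_smul_right,
      real_inner_self_eq_norm_mul_norm, norm_smul, Real.norm_of_nonneg hc0]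
    rcases (norm_nonneg p).eq_or_lt with hp | hp
    · rw [← hp]; ring
    · field_simp
  · rw [zero_smul, inner_zero_right, norm_zero, mul_zero]

end Prox

theorem l2norm_eq_norm_toLp {ι : Type*} [Fintype ι] (v : ι → ℝ) :
    l2norm v = ‖toLp 2 v‖ := by
  simp [l2norm, EuclideanSpace.norm_eq]

namespace Matrix

theorem real_inner_toLp_mulVec {m n : Type*} [Fintype m] [Fintype n]
    (D : Matrix m n ℝ) (w : n → ℝ) (x : m → ℝ) :
    ⟪toLp 2 (D *ᵥ w), toLp 2 x⟫ = ⟪toLp 2 w, toLp 2 (Dᵀ *ᵥ x)⟫ := by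
  simp only [EuclideanSpace.inner_toLp_toLp, star_trivial, dotProduct_mulVec, mulVec_transpose]

theorem posDef_transpose_mul_self_add_smul_one {m n : Type*} [Fintype m] [Fintype n]
    [DecidableEq n] (D : Matrix m n ℝ) {τ : ℝ} (hτ : 0 < τ) : (Dᵀ * D + τ • 1).PosDef := by
  simpa [conjTranspose_eq_transpose_of_trivial] using
    PosDef.posSemidef_add (posSemidef_conjTranspose_mul_self D) (PosDef.one.smul hτ)

theorem mul_one_sub_mul_inv_add_smul_one_mul {m n R : Type*} [Fintype n] [DecidableEq n]
    [Fintype m] [DecidableEq m] [CommRing R] (B : Matrix n m R) (D : Matrix m n R) (τ : R)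
    (h : IsUnit (B * D + τ • 1).det) :
    B * (1 - D * (B * D + τ • 1)⁻¹ * B) = τ • ((B * D + τ • 1)⁻¹ * B) := by
  set M := B * D + τ • (1 : Matrix n n R)
  calc B * (1 - D * M⁻¹ * B) = M * M⁻¹ * B - B * D * M⁻¹ * B := by
        rw [mul_nonsing_inv M h, Matrix.one_mul, Matrix.mul_sub, Matrix.mul_one,
          Matrix.mul_assoc, Matrix.mul_assoc, Matrix.mul_assoc]
    _ = τ • (M⁻¹ * B) := by
        rw [← Matrix.sub_mul, ← Matrix.sub_mul, add_sub_cancel_left, Matrix.smul_mul,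
          Matrix.one_mul, Matrix.smul_mul]

end Matrix

theorem prox_ridge_projection_solution_general
    (d q : ℕ)
    (D : Matrix (Fin d) (Fin q) ℝ) (ν : Fin d → ℝ)
    (lamBar gamBar : ℝ) (hgam : 0 ≤ gamBar)
    (f : (Fin d → ℝ) → ℝ)
    (hf : ∀ η, f η = (1 / 2) * (l2norm (fun i => η i - ν i)) ^ 2
        + lamBar * l2norm (D.transpose.mulVec η) + gamBar * l2norm η)
    (τ : ℝ) (hτ : 0 < τ)
    (hτeq : l2norm ((D.transpose * D + τ • (1 : Matrix (Fin q) (Fin q) ℝ))⁻¹.mulVec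
        (D.transpose.mulVec ν)) = lamBar)
    (Pτ : Matrix (Fin d) (Fin d) ℝ)
    (hPτ : Pτ = 1 - D * (D.transpose * D + τ • (1 : Matrix (Fin q) (Fin q) ℝ))⁻¹ * D.transpose) :
    ∀ η, f (max (1 - gamBar / l2norm (Pτ.mulVec ν)) 0 • Pτ.mulVec ν) ≤ f η := by
  intro η
  subst hPτ
  set M := Dᵀ * D + τ • (1 : Matrix (Fin q) (Fin q) ℝ)
  have hM : IsUnit M.det :=
    (isUnit_iff_isUnit_det M).mp (posDef_transpose_mul_self_add_smul_one D hτ).isUnit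
  set w := M⁻¹ *ᵥ Dᵀ *ᵥ ν
  set p := (1 - D * M⁻¹ * Dᵀ) *ᵥ ν with hp
  have hνp : ν - p = D *ᵥ w := by
    rw [hp, sub_mulVec, one_mulVec, sub_sub_cancel, mulVec_mulVec, mulVec_mulVec,
      Matrix.mul_assoc]
  have hDp : Dᵀ *ᵥ p = τ • w := by
    rw [hp, mulVec_mulVec, mul_one_sub_mul_inv_add_smul_one_mul _ _ _ hM, smul_mulVec,
      ← mulVec_mulVec]
  set c := max (1 - gamBar / ‖toLp 2 p‖) 0
  rw [hf, hf]
  simp only [l2norm_eq_norm_toLp] at hτeq ⊢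
  refine half_sq_norm_sub_add_norm_add_norm_le_of_certificate (fun x => toLp 2 (Dᵀ *ᵥ ofLp x))
    (u := toLp 2 (D *ᵥ w)) (w := toLp 2 w) (s := toLp 2 p - c • toLp 2 p)
    (fun x => real_inner_toLp_mulVec D w (ofLp x)) ?_ hτeq.le ?_
    (norm_sub_max_one_sub_div_norm_smul_le hgam _) (inner_sub_max_one_sub_div_norm_smul _) _
  · rw [← hνp, toLp_sub]
    abel
  · have hDx₀ : Dᵀ *ᵥ ofLp (c • toLp 2 p) = (c * τ) • w := by
      rw [ofLp_smul, ofLp_toLp, mulVec_smul, hDp, smul_smul]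
    rw [hDx₀, toLp_smul, real_inner_smul_right, real_inner_self_eq_norm_mul_norm, norm_smul,
      Real.norm_of_nonneg (mul_nonneg (le_max_right _ _) hτ.le), hτeq]
    ring

/-- Part (iii) of the closed-form proximal solution.  If `τ > 0` satisfies
`‖(DᵀD + τI)⁻¹Dᵀν‖₂ = λ̄`, and `P_τ = I − D(DᵀD + τI)⁻¹Dᵀ`, then
`η̂ = max(1 − γ̄/‖P_τ ν‖₂, 0) · P_τ ν` globally minimizes
`f(η) = (1/2)‖η − ν‖₂² + λ̄‖Dᵀη‖₂ + γ̄‖η‖₂`. -/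
theorem prox_ridge_projection_solution
    (d q : ℕ) (hd : 0 < d) (hq : 0 < q)
    (D : Matrix (Fin d) (Fin q) ℝ) (ν : Fin d → ℝ)
    (lamBar gamBar : ℝ) (hlam : 0 < lamBar) (hgam : 0 ≤ gamBar)
    (f : (Fin d → ℝ) → ℝ)
    (hf : ∀ η, f η = (1 / 2) * (l2norm (fun i => η i - ν i)) ^ 2
        + lamBar * l2norm (D.transpose.mulVec η) + gamBar * l2norm η)
    (τ : ℝ) (hτ : 0 < τ)
    (hτeq : l2norm ((D.transpose * D + τ • (1 : Matrix (Fin q) (Fin q) ℝ))⁻¹.mulVec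
        (D.transpose.mulVec ν)) = lamBar)
    (Pτ : Matrix (Fin d) (Fin d) ℝ)
    (hPτ : Pτ = 1 - D * (D.transpose * D + τ • (1 : Matrix (Fin q) (Fin q) ℝ))⁻¹ * D.transpose) :
    ∀ η, f (max (1 - gamBar / l2norm (Pτ.mulVec ν)) 0 • Pτ.mulVec ν) ≤ f η :=
  prox_ridge_projection_solution_general d q D ν lamBar gamBar hgam f hf τ hτ hτeq Pτ hPτ
end

section
/- Let J ≥ 2 and K ≥ 2 be integers and let D be the log-odds constraint matrix. Then (DᵀD)² = (J·K)·(DᵀD), and the rank of D equals (J − 1)(K − 1). Consequently, every nonzero singular value of D equals √(JK), and D has exactly (J − 1)(K − 1) nonzero singular values (counted with multiplicity). -/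
/-- The log-odds constraint matrix `D` of the bivariate categorical response
model: rows are indexed by pairs `(j,k)`, columns by quadruples
`(j,j',k,k')` with `j < j'` and `k < k'`, and the column indexed by
`(j,j',k,k')` is `e_{(j,k)} − e_{(j',k)} − e_{(j,k')} + e_{(j',k')}`. -/
noncomputable def logOddsD (J K : ℕ) :
    Matrix (Fin J × Fin K)
      {c : (Fin J × Fin J) × (Fin K × Fin K) // c.1.1 < c.1.2 ∧ c.2.1 < c.2.2} ℝ :=
  fun r c =>
    (if r = (c.val.1.1, c.val.2.1) then (1 : ℝ) else 0)
    - (if r = (c.val.1.2, c.val.2.1) then 1 else 0)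
    - (if r = (c.val.1.1, c.val.2.2) then 1 else 0)
    + (if r = (c.val.1.2, c.val.2.2) then 1 else 0)

/-!
Column `(j, j', k, k')` of `D` is `(e_j - e_j') ⊗ (e_k - e_k')`, so `D` is, up to relabelling
its columns, the Kronecker product `A_J ⊗ A_K` of the oriented incidence matrices of the
complete graphs on `J` and `K` vertices. Since `A_n A_nᵀ = n I - 𝟙𝟙ᵀ` and `𝟙ᵀ A_n = 0`,
`(A_nᵀ A_n)² = n A_nᵀ A_n`; taking Kronecker products gives `(DᵀD)² = JK DᵀD`. Hence
`DᵀD / JK` is idempotent, its rank equals its trace `(J² - J)(K² - K) / JK`, and every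
eigenvalue of `DᵀD` is `0` or `JK`.
-/

open Matrix
open scoped Kronecker

namespace Matrix

variable {ι K : Type*} [Fintype ι] [Field K]

theorem rank_eq_trace_of_isIdempotentElem {P : Matrix ι ι K} (hP : IsIdempotentElem P) :
    (P.rank : K) = P.trace := by
  classical
  have h : IsIdempotentElem (toLin' P) := hP.map toLinAlgEquiv'
  rw [← trace_toLin'_eq, (LinearMap.IsIdempotentElem.isProj_range _ h).trace]
  rfl

theorem mul_rank_eq_trace_of_mul_self_eq_smul {M : Matrix ι ι K} {c : K} (hc : c ≠ 0)
    (hM : M * M = c • M) : c * M.rank = M.trace := by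
  have hP : IsIdempotentElem (c⁻¹ • M) := by
    rw [IsIdempotentElem, smul_mul_smul_comm, hM, smul_smul, inv_mul_cancel_right₀ hc]
  have hrank : (c⁻¹ • M).rank = M.rank :=
    rank_smul_of_mem_nonZeroDivisors M (mem_nonZeroDivisors_of_ne_zero (inv_ne_zero hc))
  rw [← hrank, rank_eq_trace_of_isIdempotentElem hP, trace_smul, smul_eq_mul,
    mul_inv_cancel_left₀ hc]

theorem eq_zero_or_eq_of_mul_self_eq_smul {M : Matrix ι ι K} {c μ : K} (hM : M * M = c • M)
    {v : ι → K} (hv : v ≠ 0) (hMv : M *ᵥ v = μ • v) : μ = 0 ∨ μ = c := by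
  have h : (μ * μ - c * μ) • v = 0 := by
    rw [sub_smul, mul_smul, mul_smul, ← hMv, ← mulVec_smul, ← hMv, mulVec_mulVec, hM,
      smul_mulVec, sub_self]
  have hμ : μ * (μ - c) = 0 := by
    linear_combination (smul_eq_zero.mp h).resolve_right hv
  rcases mul_eq_zero.mp hμ with h0 | hc
  · exact Or.inl h0
  · exact Or.inr (sub_eq_zero.mp hc)

end Matrix

theorem two_nsmul_sum_lt_eq_sum_sum {α M : Type*} [Fintype α] [LinearOrder α] [AddCommMonoid M]
    (f : α → α → M) (hf : ∀ x y, f x y = f y x) (hdiag : ∀ x, f x x = 0) :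
    2 • ∑ p : {p : α × α // p.1 < p.2}, f p.1.1 p.1.2 = ∑ x, ∑ y, f x y := by
  have hsplit : ∀ x y, f x y = (if x < y then f x y else 0) + (if y < x then f y x else 0) := by
    intro x y
    rcases lt_trichotomy x y with h | rfl | h
    · simp [h, h.not_gt]
    · simp [hdiag]
    · simp [h, h.not_gt, hf]
  have hlt : ∑ x, ∑ y, (if x < y then f x y else 0)
      = ∑ p : {p : α × α // p.1 < p.2}, f p.1.1 p.1.2 := by
    rw [← Fintype.sum_prod_type', ← Finset.sum_filter,
      Finset.sum_subtype (p := fun p : α × α => p.1 < p.2) _ (fun _ => by simp)]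
  rw [Finset.sum_congr rfl fun x _ => Finset.sum_congr rfl fun y _ => hsplit x y]
  simp only [Finset.sum_add_distrib]
  rw [Finset.sum_comm (f := fun x y => if y < x then f y x else 0), hlt, two_nsmul]

section OrientedIncidence

variable (R α : Type*) [CommRing R] [Fintype α] [LinearOrder α]

def orientedIncidence : Matrix α {p : α × α // p.1 < p.2} R :=
  of fun a p => (if a = p.1.1 then 1 else 0) - (if a = p.1.2 then 1 else 0)

variable {R α}

theorem allOnes_mul_orientedIncidence :
    (of fun _ _ => 1 : Matrix α α R) * orientedIncidence R α = 0 := by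
  ext a p
  simp [orientedIncidence, mul_apply]

theorem orientedIncidence_mul_transpose [IsAddTorsionFree R] :
    orientedIncidence R α * (orientedIncidence R α)ᵀ
      = (Fintype.card α : R) • 1 - of fun _ _ => 1 := by
  ext a b
  refine IsAddTorsionFree.nsmul_right_injective two_ne_zero ?_
  have hsum := two_nsmul_sum_lt_eq_sum_sum (M := R)
    (fun x y => ((if a = x then 1 else 0) - (if a = y then 1 else 0)) *
      ((if b = x then 1 else 0) - (if b = y then 1 else 0)))
    (fun x y => by ring) (fun x => by simp)
  simp only [mul_apply, transpose_apply, orientedIncidence, of_apply]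
  rw [hsum]
  simp only [mul_sub, mul_ite, mul_one, mul_zero, Finset.sum_sub_distrib, Finset.sum_ite_irrel,
    Finset.sum_const, Finset.card_univ, nsmul_eq_mul, Finset.sum_ite_eq,
    Finset.mem_univ, ↓reduceIte, Matrix.sub_apply, Matrix.smul_apply, one_apply, smul_eq_mul,
    of_apply, Nat.cast_ofNat]
  split_ifs <;> ring

theorem orientedIncidence_gram_mul_self [IsAddTorsionFree R] :
    ((orientedIncidence R α)ᵀ * orientedIncidence R α) *
        ((orientedIncidence R α)ᵀ * orientedIncidence R α)
      = (Fintype.card α : R) • ((orientedIncidence R α)ᵀ * orientedIncidence R α) := by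
  rw [Matrix.mul_assoc, ← Matrix.mul_assoc (orientedIncidence R α),
    orientedIncidence_mul_transpose, Matrix.sub_mul, Matrix.mul_sub,
    allOnes_mul_orientedIncidence, Matrix.mul_zero, sub_zero, smul_mul, Matrix.one_mul,
    Matrix.mul_smul]

theorem trace_orientedIncidence_mul_transpose [IsAddTorsionFree R] :
    trace (orientedIncidence R α * (orientedIncidence R α)ᵀ)
      = Fintype.card α * Fintype.card α - Fintype.card α := by
  rw [orientedIncidence_mul_transpose]
  simp [trace]

end OrientedIncidence

section LogOddsD

variable (J K : ℕ)

theorem logOddsD_eq_submatrix_kronecker :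
    logOddsD J K = (orientedIncidence ℝ (Fin J) ⊗ₖ orientedIncidence ℝ (Fin K)).submatrix id
      Equiv.subtypeProdEquivProd := by
  ext r c
  simp only [logOddsD, orientedIncidence, submatrix_apply, kroneckerMap_apply, of_apply, id,
    Equiv.subtypeProdEquivProd, Equiv.coe_fn_mk, Prod.ext_iff, ite_and]
  split_ifs <;> ring

theorem logOddsD_transpose_mul_self :
    (logOddsD J K)ᵀ * logOddsD J K =
      (((orientedIncidence ℝ (Fin J))ᵀ * orientedIncidence ℝ (Fin J)) ⊗ₖ
        ((orientedIncidence ℝ (Fin K))ᵀ * orientedIncidence ℝ (Fin K))).submatrix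
        Equiv.subtypeProdEquivProd Equiv.subtypeProdEquivProd := by
  rw [logOddsD_eq_submatrix_kronecker, transpose_submatrix,
    ← submatrix_mul _ _ _ _ _ Function.bijective_id, ← kroneckerMap_transpose,
    ← mul_kronecker_mul]

theorem logOddsD_mul_transpose :
    logOddsD J K * (logOddsD J K)ᵀ =
      (orientedIncidence ℝ (Fin J) * (orientedIncidence ℝ (Fin J))ᵀ) ⊗ₖ
        (orientedIncidence ℝ (Fin K) * (orientedIncidence ℝ (Fin K))ᵀ) := by
  rw [logOddsD_eq_submatrix_kronecker, transpose_submatrix, submatrix_mul_equiv,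
    submatrix_id_id, ← kroneckerMap_transpose, ← mul_kronecker_mul]

theorem logOddsD_gram_mul_self :
    ((logOddsD J K)ᵀ * logOddsD J K) * ((logOddsD J K)ᵀ * logOddsD J K)
      = ((J * K : ℕ) : ℝ) • ((logOddsD J K)ᵀ * logOddsD J K) := by
  rw [logOddsD_transpose_mul_self, submatrix_mul_equiv, ← mul_kronecker_mul,
    orientedIncidence_gram_mul_self, orientedIncidence_gram_mul_self, smul_kronecker,
    kronecker_smul, smul_smul, Fintype.card_fin, Fintype.card_fin, Nat.cast_mul]
  rfl

theorem trace_logOddsD_gram :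
    trace ((logOddsD J K)ᵀ * logOddsD J K) = ((J * J - J) * (K * K - K) : ℝ) := by
  rw [trace_mul_comm, logOddsD_mul_transpose, trace_kronecker,
    trace_orientedIncidence_mul_transpose, trace_orientedIncidence_mul_transpose,
    Fintype.card_fin, Fintype.card_fin]

theorem rank_logOddsD (hJ : 0 < J) (hK : 0 < K) :
    (logOddsD J K).rank = (J - 1) * (K - 1) := by
  have hJK : ((J * K : ℕ) : ℝ) ≠ 0 := by positivity
  have h := mul_rank_eq_trace_of_mul_self_eq_smul hJK (logOddsD_gram_mul_self J K)
  rw [rank_transpose_mul_self, trace_logOddsD_gram] at h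
  have hrank : ((logOddsD J K).rank : ℝ) = ((J - 1) * (K - 1) : ℕ) := by
    apply mul_left_cancel₀ hJK
    push_cast [Nat.cast_sub hJ, Nat.cast_sub hK] at h ⊢
    linear_combination h
  exact_mod_cast hrank

end LogOddsD

/-- For the log-odds constraint matrix `D`: `(DᵀD)² = (JK)·(DᵀD)`, the rank of
`D` is `(J−1)(K−1)`, and consequently every nonzero singular value of `D`
(i.e. every `σ > 0` with `DᵀD v = σ² v` for some `v ≠ 0`) equals `√(JK)`. -/
theorem logOddsD_gram_and_rank (J K : ℕ) (hJ : 2 ≤ J) (hK : 2 ≤ K) :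
    ((logOddsD J K).transpose * logOddsD J K) * ((logOddsD J K).transpose * logOddsD J K)
      = ((J * K : ℕ) : ℝ) • ((logOddsD J K).transpose * logOddsD J K) ∧
    (logOddsD J K).rank = (J - 1) * (K - 1) ∧
    (∀ σ : ℝ, 0 < σ →
      (∃ v : {c : (Fin J × Fin J) × (Fin K × Fin K) // c.1.1 < c.1.2 ∧ c.2.1 < c.2.2} → ℝ,
        v ≠ 0 ∧ ((logOddsD J K).transpose * logOddsD J K).mulVec v = σ ^ 2 • v) →
      σ = Real.sqrt ((J * K : ℕ))) := by
  refine ⟨logOddsD_gram_mul_self J K, rank_logOddsD J K (by omega) (by omega), ?_⟩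
  rintro σ hσ ⟨v, hv, hMv⟩
  rcases eq_zero_or_eq_of_mul_self_eq_smul (logOddsD_gram_mul_self J K) hv hMv with h | h
  · exact absurd h (pow_ne_zero 2 hσ.ne')
  · rw [← h, Real.sqrt_sq hσ.le]
end

section
/- Let d, q be positive integers, let D be a real d × q matrix and let ρ > 0 be such that (DᵀD)² = ρ·(DᵀD). Then for every τ > 0 and every ν ∈ ℝ^d, the matrix DᵀD + τI is invertible and ‖(DᵀD + τI)⁻¹Dᵀν‖₂ = ‖Dᵀν‖₂/(ρ + τ). -/
/-!
Write `N = DᵀD`. The hypothesis `N² = ρN` forces the columns of `Dᵀ` into the `ρ`-eigenspace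
of `N`: the matrix `M = (N - ρI)Dᵀ` satisfies `MMᵀ = (N - ρI)N(N - ρI)ᵀ = 0`, hence `M = 0`.
So `(N + τI)Dᵀν = (ρ + τ)Dᵀν`, and `N + τI`, being positive definite, inverts this to
`(N + τI)⁻¹Dᵀν = (ρ + τ)⁻¹Dᵀν`.
-/

lemma l2norm_smul {ι : Type*} [Fintype ι] (c : ℝ) (v : ι → ℝ) :
    l2norm (c • v) = |c| * l2norm v := by
  have hsum : ∑ i, (c • v) i ^ 2 = c ^ 2 * ∑ i, v i ^ 2 := by
    simp only [Pi.smul_apply, smul_eq_mul, mul_pow, Finset.mul_sum]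
  rw [l2norm, l2norm, hsum, Real.sqrt_mul (sq_nonneg c), Real.sqrt_sq_eq_abs]

namespace Matrix

variable {m n R : Type*} [Fintype m] [Fintype n] [DecidableEq n]

lemma conjTranspose_mul_self_mul_conjTranspose_eq_smul [Field R] [PartialOrder R] [StarRing R]
    [StarOrderedRing R] (D : Matrix m n R) (ρ : R)
    (h : Dᴴ * D * (Dᴴ * D) = ρ • (Dᴴ * D)) :
    Dᴴ * D * Dᴴ = ρ • Dᴴ := by
  set N := Dᴴ * D
  have hN : (N - ρ • 1) * N = 0 := by
    rw [Matrix.sub_mul, h, Matrix.smul_mul, Matrix.one_mul, sub_self]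
  have hM : (N - ρ • 1) * Dᴴ * ((N - ρ • 1) * Dᴴ)ᴴ = 0 := by
    rw [conjTranspose_mul, conjTranspose_conjTranspose, Matrix.mul_assoc, ← Matrix.mul_assoc Dᴴ,
      ← Matrix.mul_assoc, hN, Matrix.zero_mul]
  rw [self_mul_conjTranspose_eq_zero, Matrix.sub_mul, Matrix.smul_mul, Matrix.one_mul] at hM
  exact sub_eq_zero.mp hM

lemma isUnit_transpose_mul_self_add_smul_one (D : Matrix m n ℝ) {τ : ℝ} (hτ : 0 < τ) :
    IsUnit (Dᵀ * D + τ • (1 : Matrix n n ℝ)) := by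
  have hpos : (Dᵀ * D + τ • (1 : Matrix n n ℝ)).PosDef := by
    rw [← conjTranspose_eq_transpose_of_trivial]
    exact PosDef.posSemidef_add (posSemidef_conjTranspose_mul_self D) (PosDef.one.smul hτ)
  exact hpos.isUnit

lemma inv_mulVec_eq_inv_smul_of_mulVec_eq_smul [Field R] {A : Matrix n n R} (hA : IsUnit A)
    {c : R} (hc : c ≠ 0) {w : n → R} (hw : A *ᵥ w = c • w) :
    A⁻¹ *ᵥ w = c⁻¹ • w := by
  have hdet : IsUnit A.det := (isUnit_iff_isUnit_det A).mp hA
  calc A⁻¹ *ᵥ w = c⁻¹ • A⁻¹ *ᵥ (c • w) := by rw [mulVec_smul, inv_smul_smul₀ hc]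
    _ = c⁻¹ • w := by rw [← hw, mulVec_mulVec, nonsing_inv_mul A hdet, one_mulVec]

end Matrix

open Matrix in
theorem ridge_inverse_norm_general
    (d q : ℕ)
    (D : Matrix (Fin d) (Fin q) ℝ) (ρ : ℝ) (hρ : 0 < ρ)
    (hDD : (D.transpose * D) * (D.transpose * D) = ρ • (D.transpose * D)) :
    ∀ τ : ℝ, 0 < τ → ∀ ν : Fin d → ℝ,
      IsUnit (D.transpose * D + τ • (1 : Matrix (Fin q) (Fin q) ℝ)) ∧
      l2norm ((D.transpose * D + τ • (1 : Matrix (Fin q) (Fin q) ℝ))⁻¹.mulVec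
          (D.transpose.mulVec ν))
        = l2norm (D.transpose.mulVec ν) / (ρ + τ) := by
  intro τ hτ ν
  have hunit := isUnit_transpose_mul_self_add_smul_one D hτ
  have hρτ : 0 < ρ + τ := add_pos hρ hτ
  have heigen : (Dᵀ * D + τ • (1 : Matrix (Fin q) (Fin q) ℝ)) *ᵥ (Dᵀ *ᵥ ν)
      = (ρ + τ) • (Dᵀ *ᵥ ν) := by
    have hcols := conjTranspose_mul_self_mul_conjTranspose_eq_smul D ρ
      (by simpa only [conjTranspose_eq_transpose_of_trivial] using hDD)
    rw [conjTranspose_eq_transpose_of_trivial] at hcols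
    rw [add_mulVec, mulVec_mulVec, hcols, smul_mulVec, smul_mulVec, one_mulVec, add_smul]
  refine ⟨hunit, ?_⟩
  rw [inv_mulVec_eq_inv_smul_of_mulVec_eq_smul hunit hρτ.ne' heigen, l2norm_smul,
    abs_of_pos (inv_pos.mpr hρτ), inv_mul_eq_div]

/-- If `(DᵀD)² = ρ·(DᵀD)` with `ρ > 0`, then for every `τ > 0` the matrix
`DᵀD + τI` is invertible and `‖(DᵀD + τI)⁻¹Dᵀν‖₂ = ‖Dᵀν‖₂/(ρ + τ)`. -/
theorem ridge_inverse_norm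
    (d q : ℕ) (hd : 0 < d) (hq : 0 < q)
    (D : Matrix (Fin d) (Fin q) ℝ) (ρ : ℝ) (hρ : 0 < ρ)
    (hDD : (D.transpose * D) * (D.transpose * D) = ρ • (D.transpose * D)) :
    ∀ τ : ℝ, 0 < τ → ∀ ν : Fin d → ℝ,
      IsUnit (D.transpose * D + τ • (1 : Matrix (Fin q) (Fin q) ℝ)) ∧
      l2norm ((D.transpose * D + τ • (1 : Matrix (Fin q) (Fin q) ℝ))⁻¹.mulVec
          (D.transpose.mulVec ν))
        = l2norm (D.transpose.mulVec ν) / (ρ + τ) :=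
  ridge_inverse_norm_general d q D ρ hρ hDD
end

section
/- Let J ≥ 2, K ≥ 2 and p ≥ 1 be integers and let D be the log-odds constraint matrix. For every subset S ⊆ {1, …, p} and every real p × JK matrix M, it holds that Σ_{m ∈ S} ‖Dᵀ(M_{m,:})ᵀ‖₂ ≤ √(|S| · J · K · (J−1) · (K−1)) · ‖M‖_F, where M_{m,:} denotes the m-th row of M and ‖M‖_F = √(Σ_{m,g} M_{m,g}²) is the Frobenius norm. In particular, the subspace compatibility constant Ψ_{JK}(s) = sup{ Σ_{m ∈ S} ‖Dᵀ(M_{m,:})ᵀ‖₂ / ‖M‖_F : M ≠ 0 } over any S with |S| = s satisfies Ψ_{JK}(s) ≤ √(s·J·K·(J−1)(K−1)). -/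
/-!
Each column of `D` has exactly four nonzero entries, all `±1`, so by Cauchy–Schwarz every
coordinate of `Dᵀ v` has square at most `4 ‖v‖²`. Since `D` has `C(J,2)·C(K,2)` columns,
`‖Dᵀ v‖² ≤ J K (J-1) (K-1) ‖v‖²`. Summing over the rows `m ∈ S` and applying Cauchy–Schwarz
once more, now against the constant vector of length `|S|`, gives the bound.
-/

open Finset

abbrev LogOddsCol (J K : ℕ) :=
  {c : (Fin J × Fin J) × (Fin K × Fin K) // c.1.1 < c.1.2 ∧ c.2.1 < c.2.2}

lemma two_mul_card_lt_pairs (n : ℕ) :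
    2 * (Fintype.card {a : Fin n × Fin n // a.1 < a.2} : ℝ) = n * (n - 1) := by
  have hsum : 2 * Fintype.card {a : Fin n × Fin n // a.1 < a.2} = n * (n - 1) := by
    rw [Fintype.card_congr (Equiv.subtypeProdEquivSigmaSubtype fun j j' : Fin n => j < j'),
      Fintype.card_sigma]
    simp only [Fintype.card_subtype, filter_lt_eq_Ioi, Fin.card_Ioi]
    rw [Fin.sum_univ_eq_sum_range (fun j => n - 1 - j), sum_range_reflect (fun j => j) n,
      mul_comm, sum_range_id_mul_two]
  rcases n with _ | n
  · simp
  · rw [← Nat.cast_ofNat, ← Nat.cast_mul, hsum, Nat.cast_mul, Nat.add_sub_cancel]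
    push_cast
    ring

lemma four_mul_card_logOddsCol (J K : ℕ) :
    4 * (Fintype.card (LogOddsCol J K) : ℝ) = J * K * (J - 1) * (K - 1) := by
  rw [Fintype.card_congr (Equiv.subtypeProdEquivProd (p := fun a : Fin J × Fin J => a.1 < a.2)
    (q := fun b : Fin K × Fin K => b.1 < b.2)), Fintype.card_prod, Nat.cast_mul]
  linear_combination (2 * (Fintype.card {b : Fin K × Fin K // b.1 < b.2} : ℝ))
      * two_mul_card_lt_pairs J + (J * (J - 1) : ℝ) * two_mul_card_lt_pairs K

lemma logOddsD_transpose_mulVec_apply (J K : ℕ) (v : Fin J × Fin K → ℝ) (c : LogOddsCol J K) :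
    (logOddsD J K).transpose.mulVec v c
      = v (c.1.1.1, c.1.2.1) - v (c.1.1.2, c.1.2.1) - v (c.1.1.1, c.1.2.2)
        + v (c.1.1.2, c.1.2.2) := by
  simp [Matrix.mulVec, logOddsD, dotProduct, sub_mul, add_mul, ite_mul,
    sum_add_distrib, sum_sub_distrib]

lemma sq_sub_sub_add_le_four_mul_sum_sq {ι : Type*} [Fintype ι] (v : ι → ℝ) {a b c d : ι}
    (hab : a ≠ b) (hac : a ≠ c) (had : a ≠ d) (hbc : b ≠ c) (hbd : b ≠ d) (hcd : c ≠ d) :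
    (v a - v b - v c + v d) ^ 2 ≤ 4 * ∑ i, v i ^ 2 := by
  classical
  have hfour : v a ^ 2 + v b ^ 2 + v c ^ 2 + v d ^ 2 ≤ ∑ i, v i ^ 2 := by
    have h := sum_le_sum_of_subset_of_nonneg (subset_univ {a, b, c, d})
      fun i _ _ => sq_nonneg (v i)
    rwa [sum_insert (by simp [hab, hac, had]), sum_insert (by simp [hbc, hbd]),
      sum_pair hcd, ← add_assoc, ← add_assoc] at h
  nlinarith [sq_nonneg (v a + v b), sq_nonneg (v a + v c), sq_nonneg (v b + v d),
    sq_nonneg (v c + v d), sq_nonneg (v a - v d), sq_nonneg (v b - v c)]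

lemma sq_logOddsD_transpose_mulVec_apply_le (J K : ℕ) (v : Fin J × Fin K → ℝ)
    (c : LogOddsCol J K) :
    ((logOddsD J K).transpose.mulVec v c) ^ 2 ≤ 4 * ∑ g, v g ^ 2 := by
  obtain ⟨⟨⟨j, j'⟩, ⟨k, k'⟩⟩, hj, hk⟩ := c
  rw [logOddsD_transpose_mulVec_apply]
  exact sq_sub_sub_add_le_four_mul_sum_sq v (by simp [hj.ne]) (by simp [hk.ne]) (by simp [hj.ne])
    (by simp [hj.ne']) (by simp [hk.ne]) (by simp [hj.ne])

lemma l2norm_logOddsD_transpose_mulVec_le (J K : ℕ) (v : Fin J × Fin K → ℝ) :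
    l2norm ((logOddsD J K).transpose.mulVec v)
      ≤ √((J : ℝ) * K * (J - 1) * (K - 1)) * l2norm v := by
  have hC := four_mul_card_logOddsCol J K
  rw [l2norm, l2norm, ← Real.sqrt_mul (by rw [← hC]; positivity)]
  gcongr
  calc ∑ c, ((logOddsD J K).transpose.mulVec v c) ^ 2
      ≤ ∑ _c : LogOddsCol J K, 4 * ∑ g, v g ^ 2 :=
        sum_le_sum fun c _ => sq_logOddsD_transpose_mulVec_apply_le J K v c
    _ = (J : ℝ) * K * (J - 1) * (K - 1) * ∑ g, v g ^ 2 := by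
        rw [sum_const, card_univ, nsmul_eq_mul, ← hC]
        ring

lemma sum_l2norm_le_sqrt_card_mul {ι κ : Type*} [Fintype ι] [Fintype κ] (S : Finset ι)
    (M : ι → κ → ℝ) :
    ∑ m ∈ S, l2norm (M m) ≤ √(#S : ℝ) * √(∑ m, ∑ g, M m g ^ 2) := by
  have hnonneg : ∀ m, 0 ≤ ∑ g, M m g ^ 2 := fun m => sum_nonneg fun g _ => sq_nonneg (M m g)
  calc ∑ m ∈ S, l2norm (M m) = ∑ m ∈ S, √1 * √(∑ g, M m g ^ 2) := by simp [l2norm]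
    _ ≤ √(∑ _m ∈ S, (1 : ℝ)) * √(∑ m ∈ S, ∑ g, M m g ^ 2) :=
        Real.sum_sqrt_mul_sqrt_le S (fun _ => zero_le_one) hnonneg
    _ ≤ √(#S : ℝ) * √(∑ m, ∑ g, M m g ^ 2) := by
        rw [sum_const, nsmul_one]
        exact mul_le_mul_of_nonneg_left (Real.sqrt_le_sqrt <|
          sum_le_sum_of_subset_of_nonneg (subset_univ S) fun m _ _ => hnonneg m)
          (Real.sqrt_nonneg _)

theorem subspace_compatibility_bound_general
    (J K p : ℕ)
    (S : Finset (Fin p)) (M : Fin p → (Fin J × Fin K) → ℝ) :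
    ∑ m ∈ S, l2norm ((logOddsD J K).transpose.mulVec (M m))
      ≤ Real.sqrt ((S.card : ℝ) * J * K * ((J : ℝ) - 1) * ((K : ℝ) - 1))
        * Real.sqrt (∑ m, ∑ g, (M m g) ^ 2) := by
  calc ∑ m ∈ S, l2norm ((logOddsD J K).transpose.mulVec (M m))
      ≤ ∑ m ∈ S, √((J : ℝ) * K * (J - 1) * (K - 1)) * l2norm (M m) :=
        sum_le_sum fun m _ => l2norm_logOddsD_transpose_mulVec_le J K (M m)
    _ ≤ √((J : ℝ) * K * (J - 1) * (K - 1)) * (√(#S : ℝ) * √(∑ m, ∑ g, M m g ^ 2)) := by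
        rw [← mul_sum]
        gcongr
        exact sum_l2norm_le_sqrt_card_mul S M
    _ = √((#S : ℝ) * J * K * (J - 1) * (K - 1)) * √(∑ m, ∑ g, M m g ^ 2) := by
        simp only [mul_assoc, Real.sqrt_mul (Nat.cast_nonneg #S)]
        ring

/-- Bound on the subspace compatibility constant: for every `S ⊆ {1,…,p}` and
every `p × JK` real matrix `M`,
`Σ_{m ∈ S} ‖Dᵀ(M_{m,:})ᵀ‖₂ ≤ √(|S|·J·K·(J−1)·(K−1))·‖M‖_F`. -/
theorem subspace_compatibility_bound
    (J K p : ℕ) (hJ : 2 ≤ J) (hK : 2 ≤ K) (hp : 1 ≤ p)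
    (S : Finset (Fin p)) (M : Fin p → (Fin J × Fin K) → ℝ) :
    ∑ m ∈ S, l2norm ((logOddsD J K).transpose.mulVec (M m))
      ≤ Real.sqrt ((S.card : ℝ) * J * K * ((J : ℝ) - 1) * ((K : ℝ) - 1))
        * Real.sqrt (∑ m, ∑ g, (M m g) ^ 2) :=
  subspace_compatibility_bound_general J K p S M
end

section
/- Let J, K, L be positive integers and let π : {1,…,J} × {1,…,K} × {1,…,L} → ℝ be strictly positive with Σ_{j,k,l} π(j,k,l) = 1. Suppose: (a) π(j,k,l)·π(j+1,k+1,l) = π(j+1,k,l)·π(j,k+1,l) for all j ≤ J−1, k ≤ K−1, l ≤ L; (b) π(j,1,l)·π(j+1,1,l+1) = π(j+1,1,l)·π(j,1,l+1) for all j ≤ J−1, l ≤ L−1; and (c) π(1,k,l)·π(1,k+1,l+1) = π(1,k+1,l)·π(1,k,l+1) for all k ≤ K−1, l ≤ L−1. Then π factorizes completely: for all j, k, l, π(j,k,l) = π₁(j)·π₂(k)·π₃(l), where π₁(j) = Σ_{k,l} π(j,k,l), π₂(k) = Σ_{j,l} π(j,k,l) and π₃(l) = Σ_{j,k} π(j,k,l).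 -/
/-! Chaining adjacent local odds ratios along a path shows that every 2 × 2 odds ratio against a
corner cell is one, so each of the three two-way slices through the corner cell `(0,0,0)` is
rank one, and together they give `π(j,k,l) · π(0,0,0)² = π(j,0,0) · π(0,k,0) · π(0,0,l)`.
For a pmf of product form `a j * b k * c l` the marginals are `a j · B · C`, `A · b k · C`,
`A · B · c l` with `A · B · C = 1`, so their product is `π` again. -/

def HasUnitLocalOddsRatios {R : Type*} [Mul R] {m n : ℕ} (f : Fin m → Fin n → R) : Prop :=
  ∀ (i : Fin m) (j : Fin n) (hi : i.val + 1 < m) (hj : j.val + 1 < n),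
    f i j * f ⟨i.val + 1, hi⟩ ⟨j.val + 1, hj⟩ = f ⟨i.val + 1, hi⟩ j * f i ⟨j.val + 1, hj⟩

section

variable {R : Type*} [CommRing R] [IsDomain R]

theorem mul_eq_mul_zero_of_adjacent {n : ℕ} (hn : 0 < n) {g h : Fin n → R}
    (hg : ∀ i, g i ≠ 0)
    (hadj : ∀ (i : Fin n) (hi : i.val + 1 < n),
      g i * h ⟨i.val + 1, hi⟩ = h i * g ⟨i.val + 1, hi⟩)
    (i : Fin n) : g i * h ⟨0, hn⟩ = h i * g ⟨0, hn⟩ := by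
  obtain ⟨i, hi⟩ := i
  induction i with
  | zero => exact mul_comm _ _
  | succ i ih =>
    have hi' : i < n := by omega
    apply mul_left_cancel₀ (hg ⟨i, hi'⟩)
    linear_combination g ⟨i + 1, hi⟩ * ih hi' - g ⟨0, hn⟩ * hadj ⟨i, hi'⟩ hi

theorem HasUnitLocalOddsRatios.mul_corner_eq {m n : ℕ} (hm : 0 < m) (hn : 0 < n)
    {f : Fin m → Fin n → R} (hf : ∀ i j, f i j ≠ 0) (hodds : HasUnitLocalOddsRatios f)
    (i : Fin m) (j : Fin n) : f i j * f ⟨0, hm⟩ ⟨0, hn⟩ = f i ⟨0, hn⟩ * f ⟨0, hm⟩ j := by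
  have hrows : ∀ (i : Fin m) (hi : i.val + 1 < m),
      f i j * f ⟨i.val + 1, hi⟩ ⟨0, hn⟩ = f ⟨i.val + 1, hi⟩ j * f i ⟨0, hn⟩ :=
    fun i hi => mul_eq_mul_zero_of_adjacent hn (hf i) (fun j hj => hodds i j hi hj) j
  have hcol := mul_eq_mul_zero_of_adjacent hm (g := fun i => f i j) (h := fun i => f i ⟨0, hn⟩)
    (fun i => hf i j) (fun i hi => by linear_combination hrows i hi) i
  linear_combination hcol

theorem mul_corner_sq_eq_of_hasUnitLocalOddsRatios {J K L : ℕ} (hJ : 0 < J) (hK : 0 < K)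
    (hL : 0 < L) {π : Fin J → Fin K → Fin L → R} (hπ : ∀ j k l, π j k l ≠ 0)
    (ha : ∀ l, HasUnitLocalOddsRatios fun j k => π j k l)
    (hb : HasUnitLocalOddsRatios fun j l => π j ⟨0, hK⟩ l)
    (hc : HasUnitLocalOddsRatios fun k l => π ⟨0, hJ⟩ k l) (j : Fin J) (k : Fin K) (l : Fin L) :
    π j k l * π ⟨0, hJ⟩ ⟨0, hK⟩ ⟨0, hL⟩ ^ 2
      = π j ⟨0, hK⟩ ⟨0, hL⟩ * π ⟨0, hJ⟩ k ⟨0, hL⟩ * π ⟨0, hJ⟩ ⟨0, hK⟩ l := by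
  have e1 := (ha l).mul_corner_eq hJ hK (fun j k => hπ j k l) j k
  have e2 := hb.mul_corner_eq hJ hL (fun j l => hπ j _ l) j l
  have e3 := hc.mul_corner_eq hK hL (fun k l => hπ _ k l) k l
  apply mul_left_cancel₀ (hπ ⟨0, hJ⟩ ⟨0, hK⟩ l)
  linear_combination π ⟨0, hJ⟩ ⟨0, hK⟩ ⟨0, hL⟩ ^ 2 * e1
    + π ⟨0, hJ⟩ k l * π ⟨0, hJ⟩ ⟨0, hK⟩ ⟨0, hL⟩ * e2
    + π j ⟨0, hK⟩ ⟨0, hL⟩ * π ⟨0, hJ⟩ ⟨0, hK⟩ l * e3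

end

theorem exists_eq_mul_of_hasUnitLocalOddsRatios {𝕜 : Type*} [Field 𝕜] {J K L : ℕ}
    (hJ : 0 < J) (hK : 0 < K) (hL : 0 < L) {π : Fin J → Fin K → Fin L → 𝕜}
    (hπ : ∀ j k l, π j k l ≠ 0)
    (ha : ∀ l, HasUnitLocalOddsRatios fun j k => π j k l)
    (hb : HasUnitLocalOddsRatios fun j l => π j ⟨0, hK⟩ l)
    (hc : HasUnitLocalOddsRatios fun k l => π ⟨0, hJ⟩ k l) :
    ∃ (a : Fin J → 𝕜) (b : Fin K → 𝕜) (c : Fin L → 𝕜), ∀ j k l, π j k l = a j * b k * c l := by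
  have hp : π ⟨0, hJ⟩ ⟨0, hK⟩ ⟨0, hL⟩ ^ 2 ≠ 0 := pow_ne_zero 2 (hπ _ _ _)
  refine ⟨fun j => π j ⟨0, hK⟩ ⟨0, hL⟩ / π ⟨0, hJ⟩ ⟨0, hK⟩ ⟨0, hL⟩ ^ 2,
    fun k => π ⟨0, hJ⟩ k ⟨0, hL⟩, fun l => π ⟨0, hJ⟩ ⟨0, hK⟩ l, fun j k l => ?_⟩
  rw [div_mul_eq_mul_div, div_mul_eq_mul_div, eq_div_iff hp]
  exact mul_corner_sq_eq_of_hasUnitLocalOddsRatios hJ hK hL hπ ha hb hc j k l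

theorem eq_marginals_mul_of_eq_mul {α β γ R : Type*} [Fintype α] [Fintype β] [Fintype γ]
    [CommRing R] {π : α → β → γ → R} {a : α → R} {b : β → R} {c : γ → R}
    (hπ : ∀ i j k, π i j k = a i * b j * c k) (hsum : ∑ i, ∑ j, ∑ k, π i j k = 1)
    (i : α) (j : β) (k : γ) :
    π i j k = (∑ t, ∑ u, π i t u) * (∑ s, ∑ u, π s j u) * (∑ s, ∑ t, π s t k) := by
  simp only [hπ, ← Finset.mul_sum, ← Finset.sum_mul] at hsum ⊢
  linear_combination (-(a i * b j * c k) * ((∑ s, a s) * (∑ t, b t) * (∑ u, c u) + 1)) * hsum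

theorem local_odds_imply_mutual_independence_general
    (J K L : ℕ) (hJ : 0 < J) (hK : 0 < K)
    (π : Fin J → Fin K → Fin L → ℝ)
    (hpos : ∀ j k l, 0 < π j k l)
    (hsum : ∑ j, ∑ k, ∑ l, π j k l = 1)
    (ha : ∀ (j : Fin J) (k : Fin K) (l : Fin L)
        (hj : j.val + 1 < J) (hk : k.val + 1 < K),
      π j k l * π ⟨j.val + 1, hj⟩ ⟨k.val + 1, hk⟩ l
        = π ⟨j.val + 1, hj⟩ k l * π j ⟨k.val + 1, hk⟩ l)
    (hb : ∀ (j : Fin J) (l : Fin L) (hj : j.val + 1 < J) (hl : l.val + 1 < L),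
      π j ⟨0, hK⟩ l * π ⟨j.val + 1, hj⟩ ⟨0, hK⟩ ⟨l.val + 1, hl⟩
        = π ⟨j.val + 1, hj⟩ ⟨0, hK⟩ l * π j ⟨0, hK⟩ ⟨l.val + 1, hl⟩)
    (hc : ∀ (k : Fin K) (l : Fin L) (hk : k.val + 1 < K) (hl : l.val + 1 < L),
      π ⟨0, hJ⟩ k l * π ⟨0, hJ⟩ ⟨k.val + 1, hk⟩ ⟨l.val + 1, hl⟩
        = π ⟨0, hJ⟩ ⟨k.val + 1, hk⟩ l * π ⟨0, hJ⟩ k ⟨l.val + 1, hl⟩) :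
    ∀ (j : Fin J) (k : Fin K) (l : Fin L),
      π j k l = (∑ t, ∑ u, π j t u) * (∑ s, ∑ u, π s k u) * (∑ s, ∑ t, π s t l) := by
  intro j k l
  obtain ⟨a, b, c, hfac⟩ := exists_eq_mul_of_hasUnitLocalOddsRatios hJ hK l.pos
    (fun j k l => (hpos j k l).ne') (fun l j k hj hk => ha j k l hj hk) hb hc
  exact eq_marginals_mul_of_eq_mul hfac hsum j k l

/-- If (a) all adjacent local odds ratios of `(Y₁,Y₂)` within each level of
`Y₃` are one, (b) all adjacent local odds ratios of `(Y₁,Y₃)` within the first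
level of `Y₂` are one, and (c) all adjacent local odds ratios of `(Y₂,Y₃)`
within the first level of `Y₁` are one, then the joint pmf factorizes into the
product of its three marginals: `π(j,k,l) = π₁(j)·π₂(k)·π₃(l)`. -/
theorem local_odds_imply_mutual_independence
    (J K L : ℕ) (hJ : 0 < J) (hK : 0 < K) (hL : 0 < L)
    (π : Fin J → Fin K → Fin L → ℝ)
    (hpos : ∀ j k l, 0 < π j k l)
    (hsum : ∑ j, ∑ k, ∑ l, π j k l = 1)
    (ha : ∀ (j : Fin J) (k : Fin K) (l : Fin L)
        (hj : j.val + 1 < J) (hk : k.val + 1 < K),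
      π j k l * π ⟨j.val + 1, hj⟩ ⟨k.val + 1, hk⟩ l
        = π ⟨j.val + 1, hj⟩ k l * π j ⟨k.val + 1, hk⟩ l)
    (hb : ∀ (j : Fin J) (l : Fin L) (hj : j.val + 1 < J) (hl : l.val + 1 < L),
      π j ⟨0, hK⟩ l * π ⟨j.val + 1, hj⟩ ⟨0, hK⟩ ⟨l.val + 1, hl⟩
        = π ⟨j.val + 1, hj⟩ ⟨0, hK⟩ l * π j ⟨0, hK⟩ ⟨l.val + 1, hl⟩)
    (hc : ∀ (k : Fin K) (l : Fin L) (hk : k.val + 1 < K) (hl : l.val + 1 < L),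
      π ⟨0, hJ⟩ k l * π ⟨0, hJ⟩ ⟨k.val + 1, hk⟩ ⟨l.val + 1, hl⟩
        = π ⟨0, hJ⟩ ⟨k.val + 1, hk⟩ l * π ⟨0, hJ⟩ k ⟨l.val + 1, hl⟩) :
    ∀ (j : Fin J) (k : Fin K) (l : Fin L),
      π j k l = (∑ t, ∑ u, π j t u) * (∑ s, ∑ u, π s k u) * (∑ s, ∑ t, π s t l) :=
  local_odds_imply_mutual_independence_general J K L hJ hK π hpos hsum ha hb hc
end

section
/- Let J, K, p be positive integers, let b : {1,…,J} × {1,…,K} → ℝ^p, for x ∈ ℝ^p define π_{j,k}(x) = exp(⟨x, b(j,k)⟩) / Σ_{s,t} exp(⟨x, b(s,t)⟩), and fix m ∈ {1,…,p}. Suppose that for all j, j' ∈ {1,…,J} and k, k' ∈ {1,…,K}, the m-th coordinate of b(j,k) + b(j',k') − b(j,k') − b(j',k) is zero. Then for any x, x̃ ∈ ℝ^p that differ only in their m-th coordinate, all odds ratios coincide: π_{j,k}(x)·π_{j',k'}(x) / ( π_{j,k'}(x)·π_{j',k}(x) ) = π_{j,k}(x̃)·π_{j',k'}(x̃) / ( π_{j,k'}(x̃)·π_{j',k}(x̃)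 ) for all j, j', k, k'. -/
/-!
The normalising constant of the softmax cancels in an odds ratio, so the odds ratio of
`π(x)` at `(j, j', k, k')` is `exp ⟪x, b(j,k) + b(j',k') − b(j,k') − b(j',k)⟫`. The `m`-th
coordinate of that contrast vanishes, so the inner product does not see `x m`.
-/

theorem div_mul_div_div_div_mul_div_cancel {F : Type*} [Field F] (a b c d z : F) (hz : z ≠ 0) :
    a / z * (b / z) / (c / z * (d / z)) = a * b / (c * d) := by
  rw [div_mul_div_comm, div_mul_div_comm, div_div_div_cancel_right₀ (mul_ne_zero hz hz)]

theorem exp_mul_exp_div_exp_mul_exp (u v w y : ℝ) :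
    Real.exp u * Real.exp v / (Real.exp w * Real.exp y) = Real.exp (u + v - w - y) := by
  rw [← Real.exp_add, ← Real.exp_add, ← Real.exp_sub, sub_sub]

theorem sum_sum_exp_pos {α β : Type*} [Fintype α] [Fintype β] [Nonempty α] [Nonempty β]
    (η : α → β → ℝ) : 0 < ∑ s, ∑ t, Real.exp (η s t) :=
  Finset.sum_pos (fun _ _ => Finset.sum_pos (fun _ _ => Real.exp_pos _) Finset.univ_nonempty)
    Finset.univ_nonempty

theorem softmax_oddsRatio {α β : Type*} [Fintype α] [Fintype β] (η : α → β → ℝ)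
    (j j' : α) (k k' : β) :
    let q : α → β → ℝ := fun j k => Real.exp (η j k) / ∑ s, ∑ t, Real.exp (η s t)
    q j k * q j' k' / (q j k' * q j' k) = Real.exp (η j k + η j' k' - η j k' - η j' k) := by
  have : Nonempty α := ⟨j⟩
  have : Nonempty β := ⟨k⟩
  dsimp only
  rw [div_mul_div_div_div_mul_div_cancel _ _ _ _ _ (sum_sum_exp_pos η).ne',
    exp_mul_exp_div_exp_mul_exp]

theorem sum_mul_contrast {ι α β : Type*} [Fintype ι] (x : ι → ℝ) (b : α → β → ι → ℝ)
    (j j' : α) (k k' : β) :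
    ∑ i, x i * b j k i + ∑ i, x i * b j' k' i - ∑ i, x i * b j k' i - ∑ i, x i * b j' k i
      = ∑ i, x i * (b j k i + b j' k' i - b j k' i - b j' k i) := by
  simp only [mul_add, mul_sub, Finset.sum_add_distrib, Finset.sum_sub_distrib]

theorem sum_mul_eq_of_eq_of_ne {ι : Type*} [Fintype ι] {x y c : ι → ℝ} {i₀ : ι}
    (hc : c i₀ = 0) (hxy : ∀ i, i ≠ i₀ → x i = y i) :
    ∑ i, x i * c i = ∑ i, y i * c i := by
  refine Finset.sum_congr rfl fun i _ => ?_
  rcases eq_or_ne i i₀ with rfl | hi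
  · simp only [hc, mul_zero]
  · rw [hxy i hi]

theorem irrelevant_coordinate_for_odds_ratios_general
    (J K p : ℕ)
    (b : Fin J → Fin K → Fin p → ℝ)
    (π : (Fin p → ℝ) → Fin J → Fin K → ℝ)
    (hπ : ∀ x j k, π x j k = Real.exp (∑ m, x m * b j k m)
        / ∑ s, ∑ t, Real.exp (∑ m, x m * b s t m))
    (m₀ : Fin p)
    (hcontrast : ∀ (j j' : Fin J) (k k' : Fin K),
      b j k m₀ + b j' k' m₀ - b j k' m₀ - b j' k m₀ = 0) :
    ∀ x xt : Fin p → ℝ, (∀ m : Fin p, m ≠ m₀ → x m = xt m) →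
      ∀ (j j' : Fin J) (k k' : Fin K),
        π x j k * π x j' k' / (π x j k' * π x j' k)
          = π xt j k * π xt j' k' / (π xt j k' * π xt j' k) := by
  intro x xt hx j j' k k'
  have oddsRatio_eq : ∀ y : Fin p → ℝ, π y j k * π y j' k' / (π y j k' * π y j' k)
      = Real.exp (∑ m, y m * (b j k m + b j' k' m - b j k' m - b j' k m)) := by
    intro y
    simp only [hπ]
    rw [← sum_mul_contrast]
    exact softmax_oddsRatio (fun j k => ∑ m, y m * b j k m) j j' k k'
  rw [oddsRatio_eq, oddsRatio_eq]
  exact congrArg Real.exp (sum_mul_eq_of_eq_of_ne (hcontrast j j' k k') hx)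

/-- If every contrast `b(j,k)_m + b(j',k')_m − b(j,k')_m − b(j',k)_m` vanishes
for a fixed coordinate `m`, then changing only the `m`-th coordinate of `x`
leaves all odds ratios of the joint response distribution unchanged. -/
theorem irrelevant_coordinate_for_odds_ratios
    (J K p : ℕ) (hJ : 0 < J) (hK : 0 < K) (hp : 0 < p)
    (b : Fin J → Fin K → Fin p → ℝ)
    (π : (Fin p → ℝ) → Fin J → Fin K → ℝ)
    (hπ : ∀ x j k, π x j k = Real.exp (∑ m, x m * b j k m)
        / ∑ s, ∑ t, Real.exp (∑ m, x m * b s t m))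
    (m₀ : Fin p)
    (hcontrast : ∀ (j j' : Fin J) (k k' : Fin K),
      b j k m₀ + b j' k' m₀ - b j k' m₀ - b j' k m₀ = 0) :
    ∀ x xt : Fin p → ℝ, (∀ m : Fin p, m ≠ m₀ → x m = xt m) →
      ∀ (j j' : Fin J) (k k' : Fin K),
        π x j k * π x j' k' / (π x j k' * π x j' k)
          = π xt j k * π xt j' k' / (π xt j k' * π xt j' k) :=
  irrelevant_coordinate_for_odds_ratios_general J K p b π hπ m₀ hcontrast
end

section
/- Let n, p ≥ 2 and G be positive integers, let x₁, …, xₙ ∈ ℝ^p, and let Y ∈ ℝ^{n×G} have nonnegative entries with Σ_{g=1}^G Y_{i,g} = 1 for each i. Let D be any real G × q matrix each of whose columns has entries summing to zero (in particular the log-odds constraint matrix). Let λ ≥ 0, γ > 0, and define F(β) = G̃(β) + λ Σ_{m=2}^p ‖Dᵀ(β_{m,:})ᵀ‖₂ + γ Σ_{m=2}^p ‖β_{m,:}‖₂ for β ∈ ℝ^{p×G}, where G̃(β) = −(1/n) Σ_{i=1}^n [ Σ_{g=1}^G Y_{i,g} ⟨x_i, β_{:,g}⟩ − log( Σ_{g=1}^G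 exp(⟨x_i, β_{:,g}⟩) ) ] and β_{m,:} denotes the m-th row of β. If β̂ is a global minimizer of F, then for every m ∈ {2, …, p}, the entries of the m-th row of β̂ sum to zero: Σ_{g=1}^G β̂_{m,g} = 0. -/
open Finset Real
open scoped Matrix

section

variable {ι κ : Type*} [Fintype κ]

theorem Finset.sum_apply_update {α : ι → Type*} [DecidableEq ι] {s : Finset ι} {m : ι}
    (hm : m ∈ s) (h : ∀ i, α i → ℝ) (f : ∀ i, α i) (r : α m) :
    ∑ i ∈ s, h i (Function.update f m r i) = ∑ i ∈ s, h i (f i) + (h m r - h m (f m)) := by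
  rw [← add_sum_erase s _ hm, ← add_sum_erase s _ hm, Function.update_self]
  have hrest : ∑ i ∈ s.erase m, h i (Function.update f m r i) = ∑ i ∈ s.erase m, h i (f i) :=
    sum_congr rfl fun i hi => by rw [Function.update_of_ne (ne_of_mem_erase hi)]
  rw [hrest]
  ring

noncomputable def logLikTerm (y a : κ → ℝ) : ℝ :=
  ∑ g, y g * a g - log (∑ g, exp (a g))

theorem logLikTerm_sub_const [Nonempty κ] {y : κ → ℝ} (hy : ∑ g, y g = 1) (a : κ → ℝ) (t : ℝ) :
    logLikTerm y (fun g => a g - t) = logLikTerm y a := by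
  have hlin : ∑ g, y g * (a g - t) = ∑ g, y g * a g - t := by
    simp only [mul_sub, sum_sub_distrib, ← sum_mul, hy, one_mul]
  have hexp : ∑ g, exp (a g - t) = (∑ g, exp (a g)) * exp (-t) := by
    simp only [sub_eq_add_neg, exp_add, sum_mul]
  have hpos : 0 < ∑ g, exp (a g) := sum_pos (fun g _ => exp_pos _) univ_nonempty
  rw [logLikTerm, logLikTerm, hlin, hexp, log_mul hpos.ne' (exp_ne_zero _), log_exp]
  ring

theorem Matrix.transpose_mulVec_sub_const {q : Type*} {D : Matrix κ q ℝ}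
    (hD : ∀ c, ∑ g, D g c = 0) (v : κ → ℝ) (t : ℝ) :
    Dᵀ *ᵥ (fun g => v g - t) = Dᵀ *ᵥ v := by
  funext c
  simp only [Matrix.mulVec, dotProduct, Matrix.transpose_apply, mul_sub, sum_sub_distrib,
    ← sum_mul, hD c, zero_mul, sub_zero]

noncomputable def rowMean (v : κ → ℝ) : ℝ := (∑ g, v g) / Fintype.card κ

theorem l2norm_sub_rowMean_lt {v : κ → ℝ} (hv : ∑ g, v g ≠ 0) :
    l2norm (fun g => v g - rowMean v) < l2norm v := by
  have hcard : (0 : ℝ) < Fintype.card κ := by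
    have : Nonempty κ := univ_nonempty_iff.mp (nonempty_of_sum_ne_zero hv)
    exact_mod_cast Fintype.card_pos
  have hsq : ∑ g, (v g - rowMean v) ^ 2 = ∑ g, v g ^ 2 - (∑ g, v g) ^ 2 / Fintype.card κ := by
    simp only [sub_sq, sum_add_distrib, sum_sub_distrib, ← sum_mul, ← mul_sum, sum_const,
      card_univ, nsmul_eq_mul, rowMean]
    field_simp
    ring
  apply sqrt_lt_sqrt (sum_nonneg fun g _ => sq_nonneg _)
  rw [hsq]
  have : 0 < (∑ g, v g) ^ 2 / Fintype.card κ := div_pos (by positivity) hcard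
  linarith

end

theorem minimizer_rows_sum_zero_general
    (n p G q : ℕ)
    (x : Fin n → Fin p → ℝ) (Y : Fin n → Fin G → ℝ)
    (hY1 : ∀ i, ∑ g, Y i g = 1)
    (D : Matrix (Fin G) (Fin q) ℝ) (hD : ∀ c, ∑ g, D g c = 0)
    (lam γ : ℝ) (hγ : 0 < γ)
    (Gt : (Fin p → Fin G → ℝ) → ℝ)
    (hGt : ∀ β, Gt β = -(1 / (n : ℝ)) * ∑ i,
      ((∑ g, Y i g * ∑ m, x i m * β m g)
        - Real.log (∑ g, Real.exp (∑ m, x i m * β m g))))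
    (F : (Fin p → Fin G → ℝ) → ℝ)
    (hF : ∀ β, F β = Gt β
        + lam * ∑ m ∈ Finset.univ.filter (fun m : Fin p => m.val ≠ 0),
            l2norm (D.transpose.mulVec (β m))
        + γ * ∑ m ∈ Finset.univ.filter (fun m : Fin p => m.val ≠ 0), l2norm (β m))
    (βhat : Fin p → Fin G → ℝ) (hmin : ∀ β, F βhat ≤ F β) :
    ∀ m : Fin p, m.val ≠ 0 → ∑ g, βhat m g = 0 := by
  intro m hm
  by_contra hsum
  have : Nonempty (Fin G) := univ_nonempty_iff.mp (nonempty_of_sum_ne_zero hsum)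
  set β := Function.update βhat m (fun g => βhat m g - rowMean (βhat m))
  have hmem : m ∈ univ.filter (fun m : Fin p => m.val ≠ 0) := mem_filter.mpr ⟨mem_univ m, hm⟩
  have hpred : ∀ i, (fun g => ∑ m', x i m' * β m' g)
      = fun g => (∑ m', x i m' * βhat m' g) - x i m * rowMean (βhat m) := by
    intro i
    funext g
    rw [sum_apply_update (mem_univ m) (fun m' (v : Fin G → ℝ) => x i m' * v g) βhat]
    ring
  have hGt_eq : Gt β = Gt βhat := by
    simp only [hGt]
    congr 2
    funext i
    exact (congrArg (logLikTerm (Y i)) (hpred i)).trans (logLikTerm_sub_const (hY1 i) _ _)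
  have hDpen := sum_apply_update hmem (fun _ v => l2norm (Dᵀ *ᵥ v)) βhat
    (fun g => βhat m g - rowMean (βhat m))
  have hγpen := sum_apply_update hmem (fun _ v => l2norm v) βhat
    (fun g => βhat m g - rowMean (βhat m))
  have hdecrease := mul_pos hγ (sub_pos.mpr (l2norm_sub_rowMean_lt hsum))
  have hle := hmin β
  rw [hF, hF, hGt_eq, hDpen, hγpen, Matrix.transpose_mulVec_sub_const hD] at hle
  linarith

/-- For the doubly group-penalized multinomial log-likelihood objective in
which each column of `D` sums to zero and `γ > 0`, every global minimizer has
all of its penalized rows (rows `m = 2, …, p`, i.e. all non-intercept rows)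
summing to zero. -/
theorem minimizer_rows_sum_zero
    (n p G q : ℕ) (hn : 0 < n) (hp : 2 ≤ p) (hG : 0 < G)
    (x : Fin n → Fin p → ℝ) (Y : Fin n → Fin G → ℝ)
    (hY0 : ∀ i g, 0 ≤ Y i g) (hY1 : ∀ i, ∑ g, Y i g = 1)
    (D : Matrix (Fin G) (Fin q) ℝ) (hD : ∀ c, ∑ g, D g c = 0)
    (lam γ : ℝ) (hlam : 0 ≤ lam) (hγ : 0 < γ)
    (Gt : (Fin p → Fin G → ℝ) → ℝ)
    (hGt : ∀ β, Gt β = -(1 / (n : ℝ)) * ∑ i,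
      ((∑ g, Y i g * ∑ m, x i m * β m g)
        - Real.log (∑ g, Real.exp (∑ m, x i m * β m g))))
    (F : (Fin p → Fin G → ℝ) → ℝ)
    (hF : ∀ β, F β = Gt β
        + lam * ∑ m ∈ Finset.univ.filter (fun m : Fin p => m.val ≠ 0),
            l2norm (D.transpose.mulVec (β m))
        + γ * ∑ m ∈ Finset.univ.filter (fun m : Fin p => m.val ≠ 0), l2norm (β m))
    (βhat : Fin p → Fin G → ℝ) (hmin : ∀ β, F βhat ≤ F β) :
    ∀ m : Fin p, m.val ≠ 0 → ∑ g, βhat m g = 0 :=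
  minimizer_rows_sum_zero_general n p G q x Y hY1 D hD lam γ hγ Gt hGt F hF βhat hmin
end
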